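/- Define g : [0,1] → ℝ by g(x) = x³ − 1.67 x² + 0.67 x. Then g(0) = 0, g(1) = 0, −D*^{1.2} g(x) ≥ 0 for all x ∈ (0,1), and yet g(0.8) < 0. (Hence Dirichlet boundary conditions alone do not yield a comparison principle for the operator −D*^{1.2} on [0,1].) -/

import Mathlib

/-
Since `g'' t = 6 t - 3.34` is affine, the Caputo derivative is explicit: writing
`6 t - 3.34 = (6 x - 3.34) - 6 (x - t)` reduces it to two power integrals, giving
`D*^{1.2} g x = x^{0.8} (25 x / 6 - 4.175) / Γ(0.8)`, which is negative on `(0, 1)`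
because the root `4.175 · 6 / 25 = 1.002` lies just beyond `1`.
-/

/-- The Caputo fractional derivative of order `δ ∈ (1,2)` of a (globally) twice
differentiable function `g`:  `D*^δ g (x) = (1/Γ(2-δ)) ∫₀ˣ (x-t)^(1-δ) g''(t) dt`. -/
noncomputable def caputoG (δ : ℝ) (g : ℝ → ℝ) (x : ℝ) : ℝ :=
  (1 / Real.Gamma (2 - δ)) *
    ∫ t in (0:ℝ)..x, (x - t) ^ (1 - δ) * deriv (deriv g) t

/-- The counterexample function `g(x) = x³ − 1.67 x² + 0.67 x`. -/
noncomputable def gEx : ℝ → ℝ := fun x => x ^ 3 - 1.67 * x ^ 2 + 0.67 * x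

open Real intervalIntegral

lemma Real.rpow_mul_self {x p : ℝ} (hp : p + 1 ≠ 0) : x ^ p * x = x ^ (p + 1) := by
  rcases eq_or_ne x 0 with rfl | hx
  · rw [mul_zero, zero_rpow hp]
  · exact (rpow_add_one hx p).symm

lemma intervalIntegrable_sub_rpow {p : ℝ} (hp : -1 < p) (x : ℝ) :
    IntervalIntegrable (fun t => (x - t) ^ p) MeasureTheory.volume 0 x := by
  simpa using ((intervalIntegrable_rpow' (a := 0) (b := x) hp).comp_sub_left x).symm

lemma integral_sub_rpow {p : ℝ} (hp : -1 < p) (x : ℝ) :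
    ∫ t in (0:ℝ)..x, (x - t) ^ p = x ^ (p + 1) / (p + 1) := by
  rw [integral_comp_sub_left (fun s => s ^ p), sub_self, sub_zero, integral_rpow (Or.inl hp),
    zero_rpow (by linarith), sub_zero]

lemma integral_sub_rpow_mul_affine {p : ℝ} (hp : -1 < p) (a b x : ℝ) :
    ∫ t in (0:ℝ)..x, (x - t) ^ p * (a * t + b) =
      (a * x + b) * (x ^ (p + 1) / (p + 1)) - a * (x ^ (p + 2) / (p + 2)) := by
  have hp1 : -1 < p + 1 := by linarith
  have hsplit : ∀ t,
      (x - t) ^ p * (a * t + b) = (a * x + b) * (x - t) ^ p - a * (x - t) ^ (p + 1) :=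
    fun t => by rw [← rpow_mul_self (by linarith)]; ring
  simp_rw [hsplit]
  rw [integral_sub ((intervalIntegrable_sub_rpow hp x).const_mul _)
      ((intervalIntegrable_sub_rpow hp1 x).const_mul _),
    integral_const_mul, integral_const_mul, integral_sub_rpow hp, integral_sub_rpow hp1]
  ring_nf

lemma caputoG_of_deriv_deriv_affine {δ a b : ℝ} (hδ : δ < 2) {g : ℝ → ℝ}
    (hg : ∀ t, deriv (deriv g) t = a * t + b) (x : ℝ) :
    caputoG δ g x = ((a * x + b) * (x ^ (2 - δ) / (2 - δ)) - a * (x ^ (3 - δ) / (3 - δ)))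
      / Gamma (2 - δ) := by
  have h := integral_sub_rpow_mul_affine (p := 1 - δ) (by linarith) a b x
  rw [show 1 - δ + 1 = 2 - δ by ring, show 1 - δ + 2 = 3 - δ by ring] at h
  simp_rw [caputoG, hg, h]
  ring

lemma deriv_gEx : deriv gEx = fun x => 3 * x ^ 2 - 3.34 * x + 0.67 := by
  ext x
  have h : HasDerivAt gEx _ x :=
    ((hasDerivAt_pow 3 x).sub ((hasDerivAt_pow 2 x).const_mul 1.67)).add
      ((hasDerivAt_id x).const_mul 0.67)
  rw [h.deriv]
  norm_num; ring

lemma deriv_deriv_gEx (t : ℝ) : deriv (deriv gEx) t = 6 * t - 3.34 := by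
  have h : HasDerivAt (fun x : ℝ => 3 * x ^ 2 - 3.34 * x + 0.67) _ t :=
    (((hasDerivAt_pow 2 t).const_mul 3).sub ((hasDerivAt_id t).const_mul 3.34)).add_const 0.67
  rw [deriv_gEx, h.deriv]
  norm_num; ring

theorem stmt3 :
    gEx 0 = 0 ∧ gEx 1 = 0 ∧
    (∀ x ∈ Set.Ioo (0:ℝ) 1, 0 ≤ -caputoG 1.2 gEx x) ∧
    gEx 0.8 < 0 := by
  refine ⟨by norm_num [gEx], by norm_num [gEx], fun x ⟨hx0, hx1⟩ => ?_, by norm_num [gEx]⟩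
  have hpow : x ^ (3 - 1.2 : ℝ) = x ^ (2 - 1.2 : ℝ) * x := by
    rw [← rpow_add_one hx0.ne']; norm_num
  have hfactor :
      (6 * x + -3.34) * (x ^ (2 - 1.2 : ℝ) / (2 - 1.2)) - 6 * (x ^ (3 - 1.2 : ℝ) / (3 - 1.2)) =
        x ^ (2 - 1.2 : ℝ) * (25 / 6 * x - 4.175) := by
    rw [hpow]; ring
  rw [caputoG_of_deriv_deriv_affine (a := 6) (b := -3.34) (by norm_num)
      (fun t => by rw [deriv_deriv_gEx]; ring), hfactor, neg_nonneg]
  exact div_nonpos_of_nonpos_of_nonneg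
    (mul_nonpos_of_nonneg_of_nonpos (rpow_nonneg hx0.le _) (by linarith))
    (Gamma_pos_of_pos (by norm_num)).le
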